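/- In ADN with loop-free FIB distances, every Interest injected into the network is resolved in finitely many steps: either a data packet/NACK is generated at a router (when the content is cached, the anchor is reached, or no valid next hop exists), or the Interest is forwarded to a router with a strictly smaller distance to the anchor; hence after at most d(v_0) forwarding steps (where v_0 is the ingress router and d its distance to the anchor) the Interest can no longer be forwarded and must be answered. -/
import Mathlib


/-- An Interest at router `v t` carrying distance `hc t` is *resolved* when
the content is cached there, the anchor is reached, or no valid next hop
exists; otherwise it is forwarded. -/
def AdnResolved {V : Type} (hasContent : V → Prop) (a : V)
    (dvia : V → V → ℕ) (v : ℕ → V) (hc : ℕ → ℕ) (t : ℕ) : Prop :=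
  hasContent (v t) ∨ v t = a ∨ ∀ w : V, ¬ hc t > dvia (v t) w

/-- ADN termination: with loop-free FIB distances (`d a = 0`,
`d w ≤ dvia v w`), every Interest injected at ingress router `v 0` carrying
distance `hc 0` is resolved in finitely many steps: as long as it is not
resolved it is forwarded to some `w` with strictly smaller carried distance
`dvia (v t) w < hc t`, so after at most `hc 0` forwarding steps it can no
longer be forwarded and must be answered with a data packet or a NACK. -/
theorem adn_interest_resolved_in_finitely_many_steps
    (V : Type) (hasContent : V → Prop) (a : V)
    (d : V → ℕ) (dvia : V → V → ℕ)
    (hanchor : d a = 0)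
    (hvia : ∀ v w : V, d w ≤ dvia v w)
    (v : ℕ → V) (hc : ℕ → ℕ)
    (hstep : ∀ t, ¬ AdnResolved hasContent a dvia v hc t →
      ∃ w : V, hc t > dvia (v t) w ∧ v (t + 1) = w ∧
        hc (t + 1) = dvia (v t) w) :
    ∃ t ≤ hc 0, AdnResolved hasContent a dvia v hc t := by
  by_contra hcon
  push_neg at hcon
  have key : ∀ t, t ≤ hc 0 → hc t + t ≤ hc 0 := by
    intro t
    induction t with
    | zero => simp
    | succ n ih =>
      intro hn
      have hn' : n ≤ hc 0 := Nat.le_of_succ_le hn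
      have h1 := ih hn'
      obtain ⟨w, hw, -, hceq⟩ := hstep n (hcon n hn')
      omega
  have h0 : hc (hc 0) = 0 := by have := key (hc 0) le_rfl; omega
  obtain ⟨w, hw, -, -⟩ := hstep (hc 0) (hcon (hc 0) le_rfl)
  omega
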